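/- arXiv:1703.04272 — 2 statements merged into one kernel-verified Lean document; each statement's English description precedes it below -/
import Mathlib

section
/- Suppose Ω is the disjoint union of α^H, β^H, and the set of isolated vertices of Γ. Then Γ = Γ(H,Ω,(α,β)) is futile if and only if the point stabilizer H_α acts transitively on β^H. -/
/-- The arc set of the orbital graph of `H` on `Ω` with base-pair `(α, β)`:
`{(α^h, β^h) : h ∈ H}`. -/
def orbitalArcs {Ω : Type*} (H : Subgroup (Equiv.Perm Ω)) (α β : Ω) : Set (Ω × Ω) :=
  {p | ∃ h ∈ H, h α = p.1 ∧ h β = p.2}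

/-- The `H`-orbit of a point. -/
def orb {Ω : Type*} (H : Subgroup (Equiv.Perm Ω)) (α : Ω) : Set Ω :=
  {γ | ∃ h ∈ H, h α = γ}

/-- A permutation `g` stabilizes the (ordered) orbit partition of `H` iff it maps every
point into its own `H`-orbit. -/
def stabilizesOrbitPartition {Ω : Type*} (H : Subgroup (Equiv.Perm Ω)) (g : Equiv.Perm Ω) : Prop :=
  ∀ x : Ω, g x ∈ orb H x

/-- The orbital graph is futile iff every permutation stabilizing the orbit partition of `H`
induces a graph automorphism of the orbital graph. -/
def Futile {Ω : Type*} (H : Subgroup (Equiv.Perm Ω)) (α β : Ω) : Prop :=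
  ∀ g : Equiv.Perm Ω, stabilizesOrbitPartition H g →
    ∀ γ δ : Ω, (γ, δ) ∈ orbitalArcs H α β ↔ (g γ, g δ) ∈ orbitalArcs H α β

private lemma orb_mem_trans {Ω : Type*} {H : Subgroup (Equiv.Perm Ω)} {a b : Ω}
    (hb : b ∈ orb H a) {g : Equiv.Perm Ω} (hg : g ∈ H) : g b ∈ orb H a := by
  obtain ⟨h, hh, rfl⟩ := hb
  exact ⟨g * h, mul_mem hg hh, rfl⟩

private lemma orb_mem_iff {Ω : Type*} {H : Subgroup (Equiv.Perm Ω)} {a b c : Ω}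
    (hc : c ∈ orb H b) : b ∈ orb H a ↔ c ∈ orb H a := by
  obtain ⟨h, hh, rfl⟩ := hc
  constructor
  · intro hb; exact orb_mem_trans hb hh
  · intro hb
    have := orb_mem_trans hb (inv_mem hh)
    simpa using this

theorem stmt_14 {Ω : Type*} [Fintype Ω] (H : Subgroup (Equiv.Perm Ω))
    (α β : Ω) (hαβ : α ≠ β)
    (hdisj : Disjoint (orb H α) (orb H β))
    (hiso : ∀ ω : Ω, ω ∉ orb H α ∪ orb H β →
      (∀ δ : Ω, (ω, δ) ∉ orbitalArcs H α β) ∧ (∀ γ : Ω, (γ, ω) ∉ orbitalArcs H α β)) :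
    Futile H α β ↔ ∀ x ∈ orb H β, ∀ y ∈ orb H β, ∃ h ∈ H, h α = α ∧ h x = y := by
  classical
  constructor
  · intro hf x hx y hy
    have base : ∀ z ∈ orb H β, ∃ h ∈ H, h α = α ∧ h β = z := by
      intro z hz
      by_cases hzb : z = β
      · exact ⟨1, one_mem H, rfl, by simp [hzb]⟩
      · have hstab : stabilizesOrbitPartition H (Equiv.swap β z) := by
          intro w
          rcases eq_or_ne w β with rfl | hwb
          · simpa [Equiv.swap_apply_left] using hz
          · rcases eq_or_ne w z with rfl | hwz
            · obtain ⟨h, hh, hhb⟩ := hz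
              refine ⟨h⁻¹, inv_mem hh, ?_⟩
              rw [Equiv.swap_apply_right, ← hhb]
              simp
            · exact ⟨1, one_mem H, by simp [Equiv.swap_apply_of_ne_of_ne hwb hwz]⟩
        have harc : (α, β) ∈ orbitalArcs H α β := ⟨1, one_mem H, rfl, rfl⟩
        have h2 := (hf _ hstab α β).mp harc
        have hga : Equiv.swap β z α = α := by
          apply Equiv.swap_apply_of_ne_of_ne hαβ
          intro h; subst h
          exact Set.disjoint_left.1 hdisj ⟨1, one_mem H, rfl⟩ hz
        rw [hga, Equiv.swap_apply_left] at h2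
        exact h2
    obtain ⟨hx', hxH, hxa, hxb⟩ := base x hx
    obtain ⟨hy', hyH, hya, hyb⟩ := base y hy
    refine ⟨hy' * hx'⁻¹, mul_mem hyH (inv_mem hxH), ?_, ?_⟩
    · have : hx'⁻¹ α = α := Equiv.Perm.inv_eq_iff_eq.2 hxa.symm
      simp [Equiv.Perm.mul_apply, this, hya]
    · have : hx'⁻¹ x = β := Equiv.Perm.inv_eq_iff_eq.2 hxb.symm
      simp [Equiv.Perm.mul_apply, this, hyb]
  · intro htr
    have arc_iff : ∀ γ δ : Ω, (γ, δ) ∈ orbitalArcs H α β ↔ γ ∈ orb H α ∧ δ ∈ orb H β := by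
      intro γ δ
      constructor
      · rintro ⟨h, hh, rfl, rfl⟩
        exact ⟨⟨h, hh, rfl⟩, ⟨h, hh, rfl⟩⟩
      · rintro ⟨⟨h₁, hh₁, rfl⟩, hδ⟩
        have hδ' : (h₁⁻¹ : Equiv.Perm Ω) δ ∈ orb H β := orb_mem_trans hδ (inv_mem hh₁)
        obtain ⟨s, hs, hsa, hsb⟩ := htr β ⟨1, one_mem H, rfl⟩ _ hδ'
        refine ⟨h₁ * s, mul_mem hh₁ hs, by simp [Equiv.Perm.mul_apply, hsa], ?_⟩
        simp [Equiv.Perm.mul_apply, hsb]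
    intro g hg γ δ
    rw [arc_iff, arc_iff]
    rw [orb_mem_iff (hg γ) (a := α), orb_mem_iff (hg δ) (a := β)]
end

section
/- Suppose β ∈ α^H and Γ = Γ(H,Ω,(α,β)) has strictly more than n(n−2) arcs, where n = |α^H|. Then the subgraph induced on α^H is a complete digraph. -/
/-!
Inside `O × O`, where `O = α^H`, the arcs form the orbit of `(α, β)`. A missing arc `(γ, δ)`
with `γ ≠ δ` spans a second orbit, and the diagonal pairs form a third (that of `(α, α)`).
These three orbits are pairwise disjoint, and the last two each project onto `O`, so they
have at least `n` elements each; hence there are at most `n² - 2n = n(n - 2)` arcs.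
-/

open MulAction

section OrbitsOfPairs

variable {G X : Type*} [Group G] [MulAction G X]

lemma fst_image_orbit_prod (x y : X) : Prod.fst '' orbit G (x, y) = orbit G x := by
  simp only [orbit, ← Set.range_comp]
  rfl

lemma ncard_orbit_le_ncard_orbit_prod [Finite X] (x y : X) :
    (orbit G x).ncard ≤ (orbit G (x, y)).ncard :=
  fst_image_orbit_prod (G := G) x y ▸ Set.ncard_image_le (Set.toFinite _)

lemma orbit_prod_subset_prod_orbit (x y : X) : orbit G (x, y) ⊆ orbit G x ×ˢ orbit G y := by
  rintro _ ⟨g, rfl⟩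
  exact ⟨mem_orbit x g, mem_orbit y g⟩

lemma diag_notMem_orbit_prod {x y : X} (hxy : x ≠ y) (z : X) : (z, z) ∉ orbit G (x, y) := by
  rintro ⟨g, hg⟩
  obtain ⟨hx, hy⟩ := Prod.ext_iff.mp hg
  exact hxy (smul_left_cancel g (hx.trans hy.symm))

lemma disjoint_orbit_of_notMem {p q : X} (h : p ∉ orbit G q) :
    Disjoint (orbit G p) (orbit G q) :=
  (orbit.eq_or_disjoint p q).resolve_left fun heq => h (heq ▸ mem_orbit_self p)

lemma orbit_prod_subset_of_mem {a x y : X} (hx : x ∈ orbit G a) (hy : y ∈ orbit G a) :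
    orbit G (x, y) ⊆ orbit G a ×ˢ orbit G a := by
  have h := orbit_prod_subset_prod_orbit (G := G) x y
  rwa [orbit_eq_iff.mpr hx, orbit_eq_iff.mpr hy] at h

theorem ncard_orbit_prod_add_le [Finite X] {a b c d : X} (hab : a ≠ b) (hcd : c ≠ d)
    (hb : b ∈ orbit G a) (hc : c ∈ orbit G a) (hd : d ∈ orbit G a)
    (hmiss : (c, d) ∉ orbit G (a, b)) :
    (orbit G (a, b)).ncard + 2 * (orbit G a).ncard ≤ (orbit G a).ncard ^ 2 := by
  have hAB := disjoint_orbit_of_notMem hmiss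
  have hAD := disjoint_orbit_of_notMem (diag_notMem_orbit_prod (G := G) hab a)
  have hBD := disjoint_orbit_of_notMem (diag_notMem_orbit_prod (G := G) hcd a)
  have hB : (orbit G a).ncard ≤ (orbit G (c, d)).ncard := by
    rw [← orbit_eq_iff.mpr hc]
    exact ncard_orbit_le_ncard_orbit_prod c d
  have hD : (orbit G a).ncard ≤ (orbit G (a, a)).ncard := ncard_orbit_le_ncard_orbit_prod a a
  have ha := mem_orbit_self (M := G) a
  calc (orbit G (a, b)).ncard + 2 * (orbit G a).ncard
      ≤ (orbit G (a, b)).ncard + (orbit G (c, d)).ncard + (orbit G (a, a)).ncard := by omega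
    _ = (orbit G (a, b) ∪ orbit G (c, d) ∪ orbit G (a, a)).ncard := by
      rw [Set.ncard_union_eq (Set.disjoint_union_left.mpr ⟨hAD.symm, hBD.symm⟩),
        Set.ncard_union_eq hAB.symm]
    _ ≤ (orbit G a ×ˢ orbit G a).ncard :=
      Set.ncard_le_ncard <| Set.union_subset (Set.union_subset (orbit_prod_subset_of_mem ha hb)
        (orbit_prod_subset_of_mem hc hd)) (orbit_prod_subset_of_mem ha ha)
    _ = (orbit G a).ncard ^ 2 := by rw [Set.ncard_prod, sq]

end OrbitsOfPairs

section PermutationGroups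

variable {Ω : Type*} (H : Subgroup (Equiv.Perm Ω))

lemma orb_eq_orbit (α : Ω) : orb H α = orbit H α := by
  ext γ
  simp [orb, mem_orbit_iff, Subgroup.smul_def, Equiv.Perm.smul_def]

lemma orbitalArcs_eq_orbit (α β : Ω) : orbitalArcs H α β = orbit H (α, β) := by
  ext ⟨γ, δ⟩
  simp [orbitalArcs, mem_orbit_iff, Subgroup.smul_def, Equiv.Perm.smul_def, and_left_comm]

end PermutationGroups

theorem stmt_17 {Ω : Type*} [Fintype Ω] (H : Subgroup (Equiv.Perm Ω))
    (α β : Ω) (hαβ : α ≠ β) (hβ : β ∈ orb H α)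
    (harcs : (orbitalArcs H α β).ncard > (orb H α).ncard * ((orb H α).ncard - 2)) :
    ∀ γ ∈ orb H α, ∀ δ ∈ orb H α, γ ≠ δ → (γ, δ) ∈ orbitalArcs H α β := by
  intro γ hγ δ hδ hγδ
  by_contra hmiss
  rw [orb_eq_orbit] at hβ hγ hδ harcs
  rw [orbitalArcs_eq_orbit] at harcs hmiss
  have hcount := ncard_orbit_prod_add_le hαβ hγδ hβ hγ hδ hmiss
  rw [sq] at hcount
  rw [Nat.mul_sub] at harcs
  omega
end
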